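/- arXiv:1807.01423 — 2 statements merged into one kernel-verified Lean document; each statement's English description precedes it below -/
import Mathlib

section
/- Let q < 0, μ < 0, p > 0, and E < -½q². Define Q(x) = ((p+2)|E|/(2|μ|))^{1/p} · cosh^{-2/p}( p√(|E|/2)|x| + arctanh(|q|/√(2|E|)) ). Then Q is even and satisfies the jump condition Q'(0+) - Q'(0-) = 2q Q(0). -/
noncomputable def arctanh (x : ℝ) : ℝ := (1/2) * Real.log ((1 + x) / (1 - x))

/-! Writing `Q x = g |x|` with `g x = C cosh (a x + b) ^ r` smooth, the one-sided derivatives of `Q`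
at `0` are `± g' 0`, and `g' 0 = r a tanh b · g 0 = q Q 0` because `tanh (arctanh t) = t` and
`r a t = q` for the constants of the bound state. -/

open Real Set

theorem arctanh_eq_artanh {x : ℝ} (hx : x ∈ Icc (-1) 1) : arctanh x = artanh x :=
  (artanh_eq_half_log hx).symm

theorem tanh_arctanh {x : ℝ} (hx : x ∈ Ioo (-1) 1) : tanh (arctanh x) = x := by
  rw [arctanh_eq_artanh (Ioo_subset_Icc_self hx), tanh_artanh hx]

theorem hasDerivAt_cosh_rpow (a b r x : ℝ) :
    HasDerivAt (fun x => cosh (a * x + b) ^ r)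
      (r * a * tanh (a * x + b) * cosh (a * x + b) ^ r) x := by
  have hlin : HasDerivAt (fun x => a * x + b) a x := by
    simpa using ((hasDerivAt_id x).const_mul a).add_const b
  have hpos := cosh_pos (a * x + b)
  convert (hlin.cosh).rpow_const (p := r) (Or.inl hpos.ne') using 1
  rw [tanh_eq_sinh_div_cosh, rpow_sub_one hpos.ne']
  field

theorem HasDerivAt.hasDerivWithinAt_comp_abs_Ici {F : Type*} [NormedAddCommGroup F]
    [NormedSpace ℝ F] {g : ℝ → F} {d : F} (h : HasDerivAt g d 0) :
    HasDerivWithinAt (fun x => g |x|) d (Ici 0) 0 :=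
  h.hasDerivWithinAt.congr (fun x hx => by rw [abs_of_nonneg hx]) (by rw [abs_zero])

theorem HasDerivAt.hasDerivWithinAt_comp_abs_Iic {F : Type*} [NormedAddCommGroup F]
    [NormedSpace ℝ F] {g : ℝ → F} {d : F} (h : HasDerivAt g d 0) :
    HasDerivWithinAt (fun x => g |x|) (-d) (Iic 0) 0 := by
  have hneg : HasDerivAt (fun x => g (-x)) (-d) 0 := by
    simpa [Function.comp_def] using h.scomp_of_eq (0 : ℝ) (hasDerivAt_neg 0) neg_zero.symm
  exact hneg.hasDerivWithinAt.congr (fun x hx => by rw [abs_of_nonpos hx]) (by simp)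

theorem abs_div_sqrt_mem_Ioo {q e : ℝ} (h : q ^ 2 < e) : |q| / √e ∈ Ioo (-1) 1 := by
  have hsqrt : 0 < √e := sqrt_pos.mpr (by linarith [sq_nonneg q])
  refine ⟨neg_one_lt_zero.trans_le (by positivity), (div_lt_one hsqrt).mpr ?_⟩
  rwa [lt_sqrt (abs_nonneg q), sq_abs]

theorem focusing_bound_state_jump_general (q μ p E : ℝ) (hq : q < 0) (hp : 0 < p)
    (hE : E < -(1/2) * q^2)
    (Q : ℝ → ℝ)
    (hQ : ∀ x, Q x = ((p + 2) * |E| / (2 * |μ|)) ^ (1/p) *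
      (Real.cosh (p * Real.sqrt (|E| / 2) * |x| + arctanh (|q| / Real.sqrt (2 * |E|))))
        ^ (-(2/p))) :
    (∀ x : ℝ, Q (-x) = Q x) ∧
    ∃ dplus dminus : ℝ,
      HasDerivWithinAt Q dplus (Set.Ici 0) 0 ∧
      HasDerivWithinAt Q dminus (Set.Iic 0) 0 ∧
      dplus - dminus = 2 * q * Q 0 := by
  set C := ((p + 2) * |E| / (2 * |μ|)) ^ (1/p)
  set a := p * √(|E| / 2)
  set t := |q| / √(2 * |E|)
  set r := -(2/p)
  have hE_neg : E < 0 := by nlinarith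
  have ht : t ∈ Ioo (-1) 1 := abs_div_sqrt_mem_Ioo (by rw [abs_of_neg hE_neg]; linarith)
  have hslope : r * a * t = q := by
    have hsqrt_two_mul : √(2 * |E|) = 2 * √(|E| / 2) := by
      rw [show 2 * |E| = 2 ^ 2 * (|E| / 2) by ring, sqrt_mul (by positivity), sqrt_sq zero_le_two]
    have : 0 < √(|E| / 2) := sqrt_pos.mpr (by positivity [abs_pos_of_neg hE_neg])
    simp only [r, a, t, abs_of_neg hq, hsqrt_two_mul]
    field
  have hg : HasDerivAt (fun x => C * cosh (a * x + arctanh t) ^ r) (q * Q 0) 0 := by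
    refine ((hasDerivAt_cosh_rpow a (arctanh t) r 0).const_mul C).congr_deriv ?_
    simp only [hQ, ← hslope, abs_zero, mul_zero, zero_add, tanh_arctanh ht]
    ring
  have hQg : Q = fun x => C * cosh (a * |x| + arctanh t) ^ r := funext hQ
  refine ⟨fun x => by rw [hQ, hQ, abs_neg], q * Q 0, -(q * Q 0), ?_, ?_, by ring⟩
  · simpa only [← hQg] using hg.hasDerivWithinAt_comp_abs_Ici
  · simpa only [← hQg] using hg.hasDerivWithinAt_comp_abs_Iic

/-- The explicit focusing nonlinear bound state is even and satisfies the jump condition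
`Q'(0+) - Q'(0-) = 2q Q(0)`. -/
theorem focusing_bound_state_jump (q μ p E : ℝ) (hq : q < 0) (hμ : μ < 0) (hp : 0 < p)
    (hE : E < -(1/2) * q^2)
    (Q : ℝ → ℝ)
    (hQ : ∀ x, Q x = ((p + 2) * |E| / (2 * |μ|)) ^ (1/p) *
      (Real.cosh (p * Real.sqrt (|E| / 2) * |x| + arctanh (|q| / Real.sqrt (2 * |E|))))
        ^ (-(2/p))) :
    (∀ x : ℝ, Q (-x) = Q x) ∧
    ∃ dplus dminus : ℝ,
      HasDerivWithinAt Q dplus (Set.Ici 0) 0 ∧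
      HasDerivWithinAt Q dminus (Set.Iic 0) 0 ∧
      dplus - dminus = 2 * q * Q 0 :=
  focusing_bound_state_jump_general q μ p E hq hp hE Q hQ
end

section
/- Let q < 0, μ > 0, and 0 < p < 4. Define Q(x) = ((p+2)q²/(μ(p|q||x|+2)²))^{1/p}. Then Q ∈ L²(ℝ) and Q satisfies -½Q''(x) + μQ(x)^{p+1} = 0 for all x > 0. -/
open MeasureTheory Filter Topology

/-! On `x > 0` the profile is `A (a x + 2)^{-2/p}` with `a = p|q|` and `A^p = (p+2)q²/μ`.
A power `A (a x + b)^r` solves `½ u'' = μ u^{p+1}` exactly when `r - 2 = r (p + 1)`, i.e.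
`r = -2/p`, and `½ r (r - 1) a² = μ A^p`. Square integrability reduces, after rescaling `x`,
to that of the Japanese bracket power `(1 + |x|)^{-4/p}`, which needs `4/p > 1`. -/

theorem integrable_mul_abs_add_rpow {a b s : ℝ} (ha : 0 < a) (hb : 0 < b) (hs : s < -1) :
    Integrable fun x : ℝ => (a * |x| + b) ^ s := by
  have hbracket : Integrable fun x : ℝ => (1 + ‖x‖) ^ (-(-s)) :=
    integrable_one_add_norm (by rw [Module.finrank_self]; push_cast; linarith)
  refine ((hbracket.comp_mul_left' (div_ne_zero ha.ne' hb.ne')).const_mul (b ^ s)).congr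
    (Eventually.of_forall fun x => ?_)
  have h1 : 0 ≤ 1 + ‖a / b * x‖ := by positivity
  dsimp only
  rw [neg_neg, ← Real.mul_rpow hb.le h1, Real.norm_eq_abs, abs_mul, abs_of_pos (div_pos ha hb)]
  congr 1
  field_simp
  ring

theorem memLp_two_mul_abs_add_rpow {a b r : ℝ} (ha : 0 < a) (hb : 0 < b) (hr : r < -(1 / 2)) :
    MemLp (fun x : ℝ => (a * |x| + b) ^ r) 2 := by
  have hcont : Continuous fun x : ℝ => (a * |x| + b) ^ r :=
    (by fun_prop : Continuous fun x : ℝ => a * |x| + b).rpow_const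
      fun x => Or.inl (by positivity)
  rw [memLp_two_iff_integrable_sq hcont.aestronglyMeasurable]
  refine (integrable_mul_abs_add_rpow ha hb (s := r * 2) (by linarith)).congr
    (Eventually.of_forall fun x => ?_)
  dsimp only
  rw [Real.rpow_mul (by positivity), Real.rpow_two]

theorem hasDerivAt_mul_add_rpow {a b r x : ℝ} (hx : 0 < a * x + b) :
    HasDerivAt (fun z => (a * z + b) ^ r) (r * a * (a * x + b) ^ (r - 1)) x := by
  have hlin : HasDerivAt (fun z : ℝ => a * z + b) a x := by
    simpa using ((hasDerivAt_id x).const_mul a).add_const b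
  convert hlin.rpow_const (p := r) (Or.inl hx.ne') using 1
  ring

theorem deriv_deriv_mul_add_rpow {a b r x : ℝ} (hx : 0 < a * x + b) :
    deriv (deriv fun z => (a * z + b) ^ r) x
      = r * (r - 1) * a ^ 2 * (a * x + b) ^ (r - 2) := by
  have hderiv : deriv (fun z => (a * z + b) ^ r) =ᶠ[𝓝 x]
      fun z => r * a * (a * z + b) ^ (r - 1) := by
    have hopen : IsOpen {z : ℝ | 0 < a * z + b} :=
      isOpen_lt continuous_const (by fun_prop)
    filter_upwards [hopen.mem_nhds hx] with z hz
    exact (hasDerivAt_mul_add_rpow hz).deriv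
  rw [hderiv.deriv_eq, ((hasDerivAt_mul_add_rpow (r := r - 1) hx).const_mul (r * a)).deriv,
    show r - 1 - 1 = r - 2 by ring]
  ring

theorem neg_half_deriv_deriv_add_mul_rpow_add_one_eq_zero {p μ A a b x : ℝ} (hp : 0 < p)
    (hA : 0 ≤ A) (hμA : μ * A ^ p = (p + 2) * a ^ 2 / p ^ 2) (hx : 0 < a * x + b) :
    -(1 / 2) * deriv (deriv fun z => A * (a * z + b) ^ (-(2 / p))) x
      + μ * (A * (a * x + b) ^ (-(2 / p))) ^ (p + 1) = 0 := by
  have hconst : deriv (deriv fun z => A * (a * z + b) ^ (-(2 / p))) x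
      = A * deriv (deriv fun z => (a * z + b) ^ (-(2 / p))) x := by
    simp only [deriv_const_mul_field']
  have hpow : (A * (a * x + b) ^ (-(2 / p))) ^ (p + 1)
      = A ^ p * A * (a * x + b) ^ (-(2 / p) - 2) := by
    rw [Real.mul_rpow hA (Real.rpow_nonneg hx.le _), ← Real.rpow_mul hx.le,
      Real.rpow_add_one' hA (by linarith)]
    congr 2
    field_simp
    ring
  rw [hconst, deriv_deriv_mul_add_rpow hx, hpow, ← mul_assoc μ, ← mul_assoc μ, hμA]
  field_simp
  ring

theorem div_mul_sq_rpow_one_div {c μ D p : ℝ} (hcμ : 0 ≤ c / μ) (hD : 0 < D) :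
    (c / (μ * D ^ 2)) ^ (1 / p) = (c / μ) ^ (1 / p) * D ^ (-(2 / p)) := by
  rw [← div_div, Real.div_rpow hcμ (by positivity), ← Real.rpow_natCast,
    ← Real.rpow_mul hD.le, Real.rpow_neg hD.le, div_eq_mul_inv]
  congr 3
  push_cast
  ring

/-- The zero-energy bound state `Q(x) = ((p+2)q²/(μ(p|q||x|+2)²))^{1/p}` for the
defocusing NLS with attractive delta potential lies in `L²(ℝ)` (for `0 < p < 4`) and
solves `-½Q'' + μ Q^{p+1} = 0` for `x > 0`. -/
theorem zero_energy_bound_state (q μ p : ℝ) (hq : q < 0) (hμ : 0 < μ)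
    (hp₁ : 0 < p) (hp₂ : p < 4)
    (Q : ℝ → ℝ)
    (hQ : ∀ x, Q x = ((p + 2) * q^2 / (μ * (p * |q| * |x| + 2)^2)) ^ (1/p)) :
    MemLp Q 2 (volume : Measure ℝ) ∧
    ∀ x : ℝ, 0 < x → -(1/2) * deriv (deriv Q) x + μ * Q x ^ (p + 1) = 0 := by
  set A := ((p + 2) * q ^ 2 / μ) ^ (1 / p)
  set a := p * |q|
  have ha : 0 < a := mul_pos hp₁ (abs_pos.mpr hq.ne)
  have hB : 0 ≤ (p + 2) * q ^ 2 / μ := by positivity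
  have hQA : Q = fun x => A * (a * |x| + 2) ^ (-(2 / p)) :=
    funext fun x => by rw [hQ, div_mul_sq_rpow_one_div hB (by positivity)]
  refine ⟨hQA ▸ (memLp_two_mul_abs_add_rpow ha two_pos ?_).const_mul A, fun x hx => ?_⟩
  · rw [neg_lt_neg_iff, div_lt_div_iff₀ two_pos hp₁]
    linarith
  have hQx : Q =ᶠ[𝓝 x] fun z => A * (a * z + 2) ^ (-(2 / p)) := by
    filter_upwards [Ioi_mem_nhds hx] with z hz
    simp only [hQA, abs_of_pos (Set.mem_Ioi.mp hz)]
  have hμA : μ * A ^ p = (p + 2) * a ^ 2 / p ^ 2 := by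
    rw [← Real.rpow_mul hB, one_div_mul_cancel hp₁.ne', Real.rpow_one, mul_pow, sq_abs]
    field_simp
  rw [hQx.deriv.deriv_eq, hQx.eq_of_nhds]
  exact neg_half_deriv_deriv_add_mul_rpow_add_one_eq_zero hp₁ (by positivity) hμA (by positivity)
end
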